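/- Let B ⊆ (ℕ → Bool) × (ℕ → Bool) be a Borel set that is symmetric, i.e., (x, y) ∈ B if and only if (y, x) ∈ B. Then there exists a nonempty perfect closed set P ⊆ (ℕ → Bool) such that either (x, y) ∈ B for all x, y ∈ P with x ≠ y, or (x, y) ∉ B for all x, y ∈ P with x ≠ y. -/

import Mathlib

/-!
Since `B` has the property of Baire, every box `[s] × [t]` of two cylinders contains a smaller box
in which `B` or its complement is comeagre, and the union `M` of the meagre differences of all
such boxes is meagre. A Mycielski-type fusion builds a perfect binary tree of cylinders in which
the two children of every node span such a decided box while distinct branches avoid `M`; two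
distinct branches thus get the colour decided at the node where they split. Pruning to a perfect
subtree on which this colour is constant gives the homogeneous perfect set, and the symmetry of
`B` makes the order of the two branches irrelevant.
-/

open Set Topology Function Filter

instance {α : Type*} [TopologicalSpace α] [DiscreteTopology α] [Nontrivial α] :
    PerfectSpace (ℕ → α) := by
  refine ⟨preperfect_iff_nhds.2 fun x _ U hU => ?_⟩
  obtain ⟨_, ⟨z, n, rfl⟩, hxz, hzU⟩ :=
    (PiNat.isTopologicalBasis_cylinders fun _ => α).mem_nhds_iff.1 hU
  obtain ⟨a, ha⟩ := exists_ne (x n)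
  refine ⟨update x n a, ⟨hzU ?_, mem_univ _⟩, fun h => ha (by simpa using congrFun h n)⟩
  rw [← PiNat.mem_cylinder_iff_eq.1 hxz]
  exact PiNat.update_mem_cylinder x n a

theorem perfect_range_of_continuous_injective {X Y : Type*} [TopologicalSpace X] [CompactSpace X]
    [PerfectSpace X] [TopologicalSpace Y] [T2Space Y] {f : X → Y} (hf : Continuous f)
    (hinj : Injective f) : Perfect (range f) := by
  refine ⟨(isCompact_range hf).isClosed, ?_⟩
  rintro _ ⟨x, rfl⟩
  have : Tendsto f (𝓝[≠] x) (𝓝[≠] (f x) ⊓ 𝓟 (range f)) :=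
    le_inf (tendsto_nhdsWithin_of_tendsto_nhds_of_eventually_within _
      (hf.continuousAt.mono_left nhdsWithin_le_nhds)
      (eventually_nhdsWithin_of_forall fun _ hy => hinj.ne hy))
      (tendsto_principal.2 (Eventually.of_forall mem_range_self))
  exact this.neBot

theorem BaireMeasurableSet.exists_isOpen_isMeagre_diff_or {X : Type*} [TopologicalSpace X]
    {B U : Set X} (hB : BaireMeasurableSet B) (hU : IsOpen U) (hne : U.Nonempty) :
    ∃ V ⊆ U, IsOpen V ∧ V.Nonempty ∧ (IsMeagre (V \ B) ∨ IsMeagre (V \ Bᶜ)) := by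
  obtain ⟨W, hW, hBW⟩ := hB.residualEq_isOpen
  have hBW' : ∀ᶠ x in residual X, x ∈ B ↔ x ∈ W := eventuallyEq_set.1 hBW
  by_cases hUW : (U ∩ W).Nonempty
  · refine ⟨U ∩ W, inter_subset_left, hU.inter hW, hUW, .inl ?_⟩
    exact mem_of_superset hBW' fun x hx ⟨⟨_, hxW⟩, hxB⟩ => hxB (hx.2 hxW)
  · refine ⟨U, subset_rfl, hU, hne, .inr ?_⟩
    exact mem_of_superset hBW' fun x hx ⟨hxU, hxB⟩ => hUW ⟨x, hxU, hx.1 (not_not.1 hxB)⟩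

theorem IsMeagre.exists_isNowhereDense_seq {X : Type*} [TopologicalSpace X] {M : Set X}
    (hM : IsMeagre M) : ∃ F : ℕ → Set X, (∀ k, IsNowhereDense (F k)) ∧ M ⊆ ⋃ k, F k := by
  obtain ⟨S, hS, hcount, hMS⟩ := isMeagre_iff_countable_union_isNowhereDense.1 hM
  obtain ⟨F, hF⟩ := (hcount.insert ∅).exists_eq_range (insert_nonempty _ _)
  refine ⟨F, fun k => ?_, hMS.trans fun x hx => ?_⟩
  · rcases (hF ▸ mem_range_self k : F k ∈ insert ∅ S) with h | h
    · exact h ▸ isNowhereDense_empty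
    · exact hS _ h
  · obtain ⟨t, ht, hxt⟩ := hx
    obtain ⟨k, rfl⟩ : t ∈ range F := hF ▸ mem_insert_of_mem _ ht
    exact mem_iUnion.2 ⟨k, hxt⟩

theorem exists_rel_forall_of_finite {α ι : Type*} (r : α → α → Prop) (hrefl : ∀ a, r a a)
    (htrans : ∀ a b c, r a b → r b c → r a c) (P : ι → α → Prop)
    (hP : ∀ i a b, r a b → P i a → P i b) {s : Set ι} (hs : s.Finite)
    (hdense : ∀ i ∈ s, ∀ a, ∃ b, r a b ∧ P i b) (a : α) : ∃ b, r a b ∧ ∀ i ∈ s, P i b := by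
  induction s, hs using Set.Finite.induction_on generalizing a with
  | empty => exact ⟨a, hrefl a, by simp⟩
  | @insert i s _ _ ih =>
    obtain ⟨b, hab, hb⟩ := ih (fun j hj => hdense j (mem_insert_of_mem i hj)) a
    obtain ⟨c, hbc, hc⟩ := hdense i (mem_insert i s) b
    exact ⟨c, htrans a b c hab hbc, forall_mem_insert.2 ⟨hc, fun j hj => hP j b c hbc (hb j hj)⟩⟩

namespace Cantor

def cyl (s : List Bool) : Set (ℕ → Bool) := {x | ∀ i (hi : i < s.length), x i = s[i]}

/-- Unlike `PiNat.res`, this lists the first `n` bits of `x` in their natural order, so that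
extending a word means appending to it. -/
def res (x : ℕ → Bool) (n : ℕ) : List Bool := List.ofFn fun i : Fin n => x i

def box (s t : List Bool) : Set ((ℕ → Bool) × (ℕ → Bool)) := cyl s ×ˢ cyl t

@[simp] lemma length_res (x : ℕ → Bool) (n : ℕ) : (res x n).length = n := List.length_ofFn

lemma mem_cyl_res_iff {x y : ℕ → Bool} {n : ℕ} : y ∈ cyl (res x n) ↔ ∀ i < n, y i = x i := by
  simp [cyl, res]

lemma mem_cyl_res (x : ℕ → Bool) (n : ℕ) : x ∈ cyl (res x n) := mem_cyl_res_iff.2 fun _ _ => rfl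

lemma res_ne_res {x y : ℕ → Bool} (hxy : x ≠ y) {n : ℕ} (hn : PiNat.firstDiff x y < n) :
    res x n ≠ res y n := fun h =>
  PiNat.apply_firstDiff_ne hxy (mem_cyl_res_iff.1 (h ▸ mem_cyl_res y n) _ hn).symm

lemma mem_cyl_append_singleton {x : ℕ → Bool} {s : List Bool} {b : Bool} :
    x ∈ cyl (s ++ [b]) ↔ x ∈ cyl s ∧ x s.length = b := by
  simp only [cyl, mem_ofPred_eq, List.length_append, List.length_singleton]
  constructor
  · intro h
    refine ⟨fun i hi => ?_, by simpa using h s.length (by omega)⟩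
    simpa [List.getElem_append_left hi] using h i (by omega)
  · rintro ⟨h, hb⟩ i hi
    rcases Nat.lt_succ_iff_lt_or_eq.1 hi with hi | rfl
    · simpa [List.getElem_append_left hi] using h i hi
    · simpa using hb

lemma mem_cyl_res_append {x z : ℕ → Bool} {d : ℕ} (h : ∀ i < d, z i = x i) :
    z ∈ cyl (res x d ++ [z d]) :=
  mem_cyl_append_singleton.2 ⟨mem_cyl_res_iff.2 h, by simp⟩

lemma ne_of_mem_cyl_append {x y : ℕ → Bool} {w : List Bool} (hx : x ∈ cyl (w ++ [false]))
    (hy : y ∈ cyl (w ++ [true])) : x ≠ y := fun h => by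
  simpa [h, (mem_cyl_append_singleton.1 hy).2] using (mem_cyl_append_singleton.1 hx).2

lemma cyl_subset_cyl {s t : List Bool} (h : s <+: t) : cyl t ⊆ cyl s := fun _ hx i hi =>
  (hx i (hi.trans_le h.length_le)).trans (h.getElem hi).symm

lemma prefix_of_mem_cyl {x : ℕ → Bool} {s t : List Bool} (hs : x ∈ cyl s) (ht : x ∈ cyl t)
    (hst : s.length ≤ t.length) : s <+: t :=
  List.prefix_iff_getElem.2 ⟨hst, fun i hi => (hs i hi).symm.trans (ht i _)⟩

lemma res_prefix_res (x : ℕ → Bool) {m n : ℕ} (h : m ≤ n) : res x m <+: res x n :=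
  prefix_of_mem_cyl (mem_cyl_res x m) (mem_cyl_res x n) (by simpa using h)

lemma res_length_eq_of_mem_cyl {x : ℕ → Bool} {s : List Bool} (h : x ∈ cyl s) :
    res x s.length = s :=
  (prefix_of_mem_cyl (mem_cyl_res x _) h (by simp)).eq_of_length (by simp)

lemma cyl_nonempty (s : List Bool) : (cyl s).Nonempty :=
  ⟨fun i => s.getD i false, fun _ hi => List.getD_eq_getElem _ _ hi⟩

lemma isOpen_cyl (s : List Bool) : IsOpen (cyl s) := by
  have : cyl s = ⋂ i : Fin s.length, (fun x : ℕ → Bool => x i) ⁻¹' {s[i]} := by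
    ext; simp [cyl, Fin.forall_iff]
  rw [this]
  exact isOpen_iInter_of_finite fun i => (continuous_apply _).isOpen_preimage _ (isOpen_discrete _)

lemma exists_res_subset {x : ℕ → Bool} {U : Set (ℕ → Bool)} (hU : IsOpen U) (hx : x ∈ U) :
    ∃ n, cyl (res x n) ⊆ U := by
  obtain ⟨_, ⟨z, n, rfl⟩, hxz, hzU⟩ :=
    (PiNat.isTopologicalBasis_cylinders fun _ => Bool).exists_subset_of_mem_open hx hU
  refine ⟨n, fun y hy => hzU ?_⟩
  rw [← PiNat.mem_cylinder_iff_eq.1 hxz]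
  exact PiNat.mem_cylinder_iff.2 (mem_cyl_res_iff.1 hy)

lemma box_subset_box {s t s' t' : List Bool} (hs : s <+: s') (ht : t <+: t') :
    box s' t' ⊆ box s t :=
  prod_mono (cyl_subset_cyl hs) (cyl_subset_cyl ht)

lemma isOpen_box (s t : List Bool) : IsOpen (box s t) := (isOpen_cyl s).prod (isOpen_cyl t)

lemma box_nonempty (s t : List Bool) : (box s t).Nonempty := (cyl_nonempty s).prod (cyl_nonempty t)

lemma exists_box_subset {V : Set ((ℕ → Bool) × (ℕ → Bool))} (hV : IsOpen V) {s t : List Bool}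
    (hne : (box s t ∩ V).Nonempty) : ∃ s' t', s <+: s' ∧ t <+: t' ∧ box s' t' ⊆ V := by
  obtain ⟨⟨x, y⟩, ⟨hx, hy⟩, hV'⟩ := hne
  obtain ⟨U₁, U₂, hU₁, hU₂, hxU, hyU, hU⟩ := isOpen_prod_iff.1 hV x y hV'
  obtain ⟨m, hm⟩ := exists_res_subset hU₁ hxU
  obtain ⟨n, hn⟩ := exists_res_subset hU₂ hyU
  set N := max (max m n) (max s.length t.length)
  refine ⟨res x N, res y N, prefix_of_mem_cyl hx (mem_cyl_res x N) (by simp [N]),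
    prefix_of_mem_cyl hy (mem_cyl_res y N) (by simp [N]), ?_⟩
  refine (prod_mono ((cyl_subset_cyl (res_prefix_res x ?_)).trans hm)
    ((cyl_subset_cyl (res_prefix_res y ?_)).trans hn)).trans hU <;> simp [N]

lemma exists_prefix_box_isMeagre_diff_or {B : Set ((ℕ → Bool) × (ℕ → Bool))}
    (hB : BaireMeasurableSet B) (s t : List Bool) :
    ∃ s' t', s <+: s' ∧ t <+: t' ∧ (IsMeagre (box s' t' \ B) ∨ IsMeagre (box s' t' \ Bᶜ)) := by
  obtain ⟨V, hVbox, hV, ⟨p, hp⟩, hmeagre⟩ :=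
    hB.exists_isOpen_isMeagre_diff_or (isOpen_box s t) (box_nonempty s t)
  obtain ⟨s', t', hs, ht, hsub⟩ := exists_box_subset hV ⟨p, hVbox hp, hp⟩
  exact ⟨s', t', hs, ht, hmeagre.imp (.mono (sdiff_subset_sdiff_left hsub))
    (.mono (sdiff_subset_sdiff_left hsub))⟩

lemma exists_prefix_box_disjoint {F : Set ((ℕ → Bool) × (ℕ → Bool))} (hF : IsNowhereDense F)
    (s t : List Bool) : ∃ s' t', s <+: s' ∧ t <+: t' ∧ Disjoint (box s' t') F := by
  have hdense : Dense (closure F)ᶜ := interior_eq_empty_iff_dense_compl.1 hF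
  obtain ⟨s', t', hs, ht, hsub⟩ := exists_box_subset isClosed_closure.isOpen_compl
    (hdense.inter_open_nonempty _ (isOpen_box s t) (box_nonempty s t))
  exact ⟨s', t', hs, ht, (subset_compl_iff_disjoint_right.1 hsub).mono_right subset_closure⟩

def meagreBoxPart (B : Set ((ℕ → Bool) × (ℕ → Bool))) : Set ((ℕ → Bool) × (ℕ → Bool)) :=
  ⋃ (s) (t) (_ : IsMeagre (box s t \ B)), box s t \ B

lemma isMeagre_meagreBoxPart (B : Set ((ℕ → Bool) × (ℕ → Bool))) :
    IsMeagre (meagreBoxPart B) :=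
  isMeagre_iUnion fun _ => isMeagre_iUnion fun _ => isMeagre_iUnion id

lemma mem_of_notMem_meagreBoxPart {B : Set ((ℕ → Bool) × (ℕ → Bool))} {s t : List Bool}
    {p : (ℕ → Bool) × (ℕ → Bool)} (hB : IsMeagre (box s t \ B)) (hp : p ∈ box s t)
    (hpB : p ∉ meagreBoxPart B) : p ∈ B :=
  of_not_not fun h => hpB (mem_iUnion₂.2 ⟨s, t, mem_iUnion.2 ⟨hB, hp, h⟩⟩)

lemma pairwise_of_forall_split {S : (ℕ → Bool) → (ℕ → Bool) → Prop} (hS : ∀ x y, S x y → S y x)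
    (h : ∀ w x y, x ∈ cyl (w ++ [false]) → y ∈ cyl (w ++ [true]) → S x y) : Pairwise S := by
  intro x y hxy
  set d := PiNat.firstDiff x y
  have hx : x ∈ cyl (res x d ++ [x d]) := mem_cyl_res_append fun _ _ => rfl
  have hy : y ∈ cyl (res x d ++ [y d]) :=
    mem_cyl_res_append fun _ hi => (PiNat.apply_eq_of_lt_firstDiff hi).symm
  have hyd : y d = !x d := by
    have := PiNat.apply_firstDiff_ne hxy
    revert this; cases x d <;> cases y d <;> simp
  rw [hyd] at hy
  cases hxd : x d <;> rw [hxd] at hx hy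
  · exact h _ x y hx hy
  · exact hS _ _ (h _ y x hy hx)

/-- The labels `σ u` of the nodes of the full binary tree span a perfect tree. -/
def IsSplitting (σ : List Bool → List Bool) : Prop := ∀ u b, σ u ++ [b] <+: σ (u ++ [b])

/-- The default `false` is never used when `σ` is splitting, by `IsSplitting.length_le`. -/
def limitMap (σ : List Bool → List Bool) (x : ℕ → Bool) : ℕ → Bool :=
  fun i => (σ (res x (i + 1))).getD i false

lemma continuous_limitMap (σ : List Bool → List Bool) : Continuous (limitMap σ) := by
  refine continuous_pi fun i => ?_
  have : (fun x => limitMap σ x i) =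
      (fun v : Fin (i + 1) → Bool => (σ (List.ofFn v)).getD i false) ∘ fun x j => x j := rfl
  rw [this]
  exact continuous_of_discreteTopology.comp (continuous_pi fun j => continuous_apply (j : ℕ))

namespace IsSplitting

variable {σ : List Bool → List Bool} (hσ : IsSplitting σ)
include hσ

lemma prefix_of_prefix {u v : List Bool} (h : u <+: v) : σ u <+: σ v := by
  obtain ⟨r, rfl⟩ := h
  induction r using List.reverseRecOn with
  | nil => simp
  | append_singleton r b ih =>
    rw [← List.append_assoc]
    exact ih.trans ((List.prefix_append _ _).trans (hσ _ b))

lemma length_le (u : List Bool) : u.length ≤ (σ u).length := by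
  induction u using List.reverseRecOn with
  | nil => simp
  | append_singleton u b ih =>
    have := (hσ u b).length_le
    simp only [List.length_append, List.length_singleton] at this ⊢
    omega

lemma limitMap_mem_cyl_res (x : ℕ → Bool) (n : ℕ) : limitMap σ x ∈ cyl (σ (res x n)) := by
  intro i hi
  have hi' : i < (σ (res x (i + 1))).length := (hσ.length_le _).trans_lt' (by simp)
  rw [limitMap, List.getD_eq_getElem _ _ hi']
  rcases le_total (i + 1) n with h | h
  · exact (hσ.prefix_of_prefix (res_prefix_res x h)).getElem hi'
  · exact ((hσ.prefix_of_prefix (res_prefix_res x h)).getElem hi).symm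

lemma limitMap_mem_cyl {x : ℕ → Bool} {u : List Bool} (hx : x ∈ cyl u) :
    limitMap σ x ∈ cyl (σ u) :=
  res_length_eq_of_mem_cyl hx ▸ hσ.limitMap_mem_cyl_res x u.length

lemma limitMap_mem_cyl_append {x : ℕ → Bool} {u : List Bool} {b : Bool}
    (hx : x ∈ cyl (u ++ [b])) : limitMap σ x ∈ cyl (σ u ++ [b]) :=
  cyl_subset_cyl (hσ u b) (hσ.limitMap_mem_cyl hx)

lemma injective_limitMap : Injective (limitMap σ) :=
  injective_iff_pairwise_ne.2 <| pairwise_of_forall_split (fun _ _ => Ne.symm)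
    fun _ _ _ hx hy => ne_of_mem_cyl_append (hσ.limitMap_mem_cyl_append hx)
      (hσ.limitMap_mem_cyl_append hy)

end IsSplitting

theorem exists_isSplitting_forall_or_forall_not (P : List Bool → Prop) :
    ∃ e, IsSplitting e ∧ ((∀ u, P (e u)) ∨ ∀ u, ¬ P (e u)) := by
  by_cases h : ∀ v, ∃ r, P (v ++ r)
  · choose r hr using h
    let e : List Bool → List Bool := fun u => u.foldl (fun v b => v ++ [b] ++ r (v ++ [b])) (r [])
    have he (u b) : e (u ++ [b]) = e u ++ [b] ++ r (e u ++ [b]) := List.foldl_concat _ _ _ _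
    refine ⟨e, fun u b => he u b ▸ List.prefix_append _ _, .inl fun u => ?_⟩
    rcases List.eq_nil_or_concat u with rfl | ⟨u, b, rfl⟩
    · exact hr []
    · rw [List.concat_eq_append, he]
      exact hr _
  · simp only [not_forall, not_exists] at h
    obtain ⟨v, hv⟩ := h
    exact ⟨(v ++ ·), fun u b => by simp, .inr hv⟩

lemma exists_update_pair {ι : Type*} (a : ι → List Bool) {u v : ι} (huv : u ≠ v)
    {R : List Bool → List Bool → Prop} (hR : ∀ s t, ∃ s' t', s <+: s' ∧ t <+: t' ∧ R s' t') :
    ∃ a' : ι → List Bool, (∀ i, a i <+: a' i) ∧ R (a' u) (a' v) := by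
  classical
  obtain ⟨s', t', hs, ht, hst⟩ := hR (a u) (a v)
  refine ⟨update (update a u s') v t', fun i => ?_, by simpa [huv] using hst⟩
  rcases eq_or_ne i v with rfl | hiv
  · simpa using ht
  rcases eq_or_ne i u with rfl | hiu
  · simpa [hiv] using hs
  · simp [hiv, hiu]

section Fusion

variable {Q : List Bool → List Bool → Prop}
  (hQ : ∀ s t s' t', s <+: s' → t <+: t' → Q s t → Q s' t')
  (hQ' : ∀ s t, ∃ s' t', s <+: s' ∧ t <+: t' ∧ Q s' t')
include hQ hQ'

lemma exists_next_level {F : ℕ → Set ((ℕ → Bool) × (ℕ → Bool))} (hF : ∀ k, IsNowhereDense (F k))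
    (a : List Bool → List Bool) (n : ℕ) :
    ∃ a' : List Bool → List Bool, (∀ w b, a w ++ [b] <+: a' (w ++ [b])) ∧
      (∀ u v, u.length = n + 1 → v.length = n + 1 → u ≠ v → ∀ k ≤ n,
        Disjoint (box (a' u) (a' v)) (F k)) ∧
      ∀ w, w.length = n → Q (a' (w ++ [false])) (a' (w ++ [true])) := by
  let r (a a' : List Bool → List Bool) : Prop := ∀ u, a u <+: a' u
  have hrefl (a) : r a a := fun _ => List.prefix_refl _
  have htrans (a b c) (h : r a b) (h' : r b c) : r a c := fun u => (h u).trans (h' u)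
  have hlen := List.finite_length_eq Bool (n + 1)
  obtain ⟨a₁, ha₁, hdisj⟩ := exists_rel_forall_of_finite r hrefl htrans
    (fun (p : List Bool × List Bool × ℕ) a =>
      p.1 ≠ p.2.1 → Disjoint (box (a p.1) (a p.2.1)) (F p.2.2))
    (fun _ _ _ hab h hne => (h hne).mono_left (box_subset_box (hab _) (hab _)))
    (hlen.prod (hlen.prod (finite_Iic n)))
    (fun ⟨u, v, k⟩ _ a => if huv : u = v then ⟨a, hrefl a, absurd huv⟩ else
      (exists_update_pair a huv (exists_prefix_box_disjoint (hF k))).imp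
        fun _ h => ⟨h.1, fun _ => h.2⟩)
    (fun u => a u.dropLast ++ u.getLast?.toList)
  obtain ⟨a₂, ha₂, hgood⟩ := exists_rel_forall_of_finite r hrefl htrans
    (fun w a => Q (a (w ++ [false])) (a (w ++ [true])))
    (fun w _ _ hab h => hQ _ _ _ _ (hab _) (hab _) h) (List.finite_length_eq Bool n)
    (fun w _ a => exists_update_pair a (by simp) hQ') a₁
  refine ⟨a₂, fun w b => ?_, fun u v hu hv huv k hk => ?_, fun w hw => hgood w hw⟩
  · simpa using (ha₁ (w ++ [b])).trans (ha₂ _)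
  · exact (hdisj ⟨u, v, k⟩ (by simp [hu, hv, hk]) huv).mono_left
      (box_subset_box (ha₂ u) (ha₂ v))

theorem exists_isSplitting_pairwise_notMem {M : Set ((ℕ → Bool) × (ℕ → Bool))}
    (hM : IsMeagre M) :
    ∃ σ, IsSplitting σ ∧ (∀ w, Q (σ (w ++ [false])) (σ (w ++ [true]))) ∧
      Pairwise fun x y => (limitMap σ x, limitMap σ y) ∉ M := by
  obtain ⟨F, hF, hMF⟩ := hM.exists_isNowhereDense_seq
  choose next hsplit hdisj hgood using exists_next_level hQ hQ' hF
  let τ (n : ℕ) : List Bool → List Bool := Nat.rec (fun _ => []) (fun n a => next a n) n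
  -- the label of a node `u` is fixed at stage `u.length` of the fusion
  let σ (u : List Bool) := τ u.length u
  have hσ_append (w b) : σ (w ++ [b]) = next (τ w.length) w.length (w ++ [b]) := by
    simp only [σ, List.length_append, List.length_singleton]; rfl
  have hσ : IsSplitting σ := fun w b => by
    rw [hσ_append]; exact hsplit (τ w.length) w.length w b
  refine ⟨σ, hσ, fun w => ?_, fun x y hxy hmem => ?_⟩
  · rw [hσ_append, hσ_append]; exact hgood (τ w.length) w.length w rfl
  obtain ⟨k, hk⟩ := mem_iUnion.1 (hMF hmem)
  set n := max k (PiNat.firstDiff x y)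
  have hσ_res (z : ℕ → Bool) : σ (res z (n + 1)) = next (τ n) n (res z (n + 1)) := by
    simp only [σ, length_res]; rfl
  refine (hdisj (τ n) n _ _ (length_res x _) (length_res y _)
    (res_ne_res hxy (Nat.lt_succ_of_le (le_max_right _ _))) k
    (le_max_left _ _)).notMem_of_mem_left ?_ hk
  rw [← hσ_res, ← hσ_res]
  exact ⟨hσ.limitMap_mem_cyl_res x _, hσ.limitMap_mem_cyl_res y _⟩

end Fusion

lemma pairwise_mem_of_isMeagre {σ e : List Bool → List Bool} (hσ : IsSplitting σ)
    (he : IsSplitting e) {C : Set ((ℕ → Bool) × (ℕ → Bool))}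
    (hC : ∀ x y, (x, y) ∈ C → (y, x) ∈ C)
    (havoid : Pairwise fun x y => (limitMap σ x, limitMap σ y) ∉ meagreBoxPart C)
    (hmeagre : ∀ u, IsMeagre (box (σ (e u ++ [false])) (σ (e u ++ [true])) \ C)) :
    Pairwise fun x y => (limitMap σ (limitMap e x), limitMap σ (limitMap e y)) ∈ C := by
  refine pairwise_of_forall_split (fun x y => hC _ _) fun w x y hx hy => ?_
  have hx' := he.limitMap_mem_cyl_append hx
  have hy' := he.limitMap_mem_cyl_append hy
  exact mem_of_notMem_meagreBoxPart (hmeagre w) ⟨hσ.limitMap_mem_cyl hx', hσ.limitMap_mem_cyl hy'⟩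
    (havoid (ne_of_mem_cyl_append hx' hy'))

end Cantor

open Cantor in
/-- Galvin's Borel partition theorem for pairs: a symmetric Borel subset of the
square of Cantor space admits a nonempty perfect homogeneous set. -/
theorem galvin_borel_coloring
    (B : Set ((ℕ → Bool) × (ℕ → Bool)))
    (hB_borel : MeasurableSet B)
    (hB_symm : ∀ x y : ℕ → Bool, (x, y) ∈ B ↔ (y, x) ∈ B) :
    ∃ P : Set (ℕ → Bool), P.Nonempty ∧ Perfect P ∧
      ((∀ x ∈ P, ∀ y ∈ P, x ≠ y → (x, y) ∈ B) ∨
       (∀ x ∈ P, ∀ y ∈ P, x ≠ y → (x, y) ∉ B)) := by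
  obtain ⟨σ, hσ, hdecided, havoid⟩ := exists_isSplitting_pairwise_notMem
    (fun s t s' t' hs ht => Or.imp (.mono (sdiff_subset_sdiff_left (box_subset_box hs ht)))
      (.mono (sdiff_subset_sdiff_left (box_subset_box hs ht))))
    (exists_prefix_box_isMeagre_diff_or hB_borel.baireMeasurableSet)
    ((isMeagre_meagreBoxPart B).union (isMeagre_meagreBoxPart Bᶜ))
  obtain ⟨e, he, hconst⟩ := exists_isSplitting_forall_or_forall_not
    fun w => IsMeagre (box (σ (w ++ [false])) (σ (w ++ [true])) \ B)
  let f := limitMap σ ∘ limitMap e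
  have homogeneous {C : Set ((ℕ → Bool) × (ℕ → Bool))} (hC : Pairwise fun x y => (f x, f y) ∈ C) :
      ∀ a ∈ range f, ∀ b ∈ range f, a ≠ b → (a, b) ∈ C := by
    rintro _ ⟨x, rfl⟩ _ ⟨y, rfl⟩ hxy
    exact hC (ne_of_apply_ne f hxy)
  refine ⟨range f, range_nonempty f, perfect_range_of_continuous_injective
    ((continuous_limitMap σ).comp (continuous_limitMap e))
    (hσ.injective_limitMap.comp he.injective_limitMap), ?_⟩
  rcases hconst with hB | hBc
  · exact .inl <| homogeneous <| pairwise_mem_of_isMeagre hσ he (fun x y => (hB_symm x y).1)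
      (havoid.mono fun _ _ h hD => h (.inl hD)) hB
  · exact .inr <| homogeneous <| pairwise_mem_of_isMeagre hσ he (fun x y => mt (hB_symm y x).1)
      (havoid.mono fun _ _ h hD => h (.inr hD)) fun u => (hdecided (e u)).resolve_left (hBc u)
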